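/- For every non-empty graph G, exactly one of the following four cases holds (all equalities up to isomorphism): (i) G is a single-vertex graph; (ii) G = A ⅋ B for some non-empty graphs A and B; (iii) G = A ⊗ B for some non-empty graphs A and B; (iv) G = P⟨A1, …, An⟩ for some prime graph P with n = |V(P)| ≥ 4 and non-empty graphs A1, …, An. -/

import Mathlib

namespace GSP

/-- Atoms: a propositional variable (coded by a natural number) with a polarity. -/
abbrev Atom := ℕ × Bool

/-- The dual atom. -/
def dualAtom (a : Atom) : Atom := (a.1, !a.2)

/-- A finite, simple, undirected graph whose vertices are labelled by atoms. -/
structure LGraph where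
  V : Type
  [fintype : Fintype V]
  adj : V → V → Prop
  symm : ∀ {v w : V}, adj v w → adj w v
  irrefl : ∀ v : V, ¬ adj v v
  label : V → Atom

attribute [instance] LGraph.fintype

namespace LGraph

/-- An isomorphism of labelled graphs: a vertex bijection preserving labels and
preserving and reflecting edges. -/
structure Iso (G H : LGraph) where
  toEquiv : G.V ≃ H.V
  adj_iff : ∀ v w : G.V, G.adj v w ↔ H.adj (toEquiv v) (toEquiv w)
  label_eq : ∀ v : G.V, H.label (toEquiv v) = G.label v

/-- `G ≅ H` : the graphs `G` and `H` are isomorphic. -/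
def iso (G H : LGraph) : Prop := Nonempty (Iso G H)

/-- The empty graph. -/
def empty : LGraph where
  V := Empty
  adj _ _ := False
  symm h := h.elim
  irrefl v := v.elim
  label v := v.elim

/-- The single-vertex graph labelled by the atom `a`. -/
def single (a : Atom) : LGraph where
  V := Unit
  adj _ _ := False
  symm h := h.elim
  irrefl _ h := h
  label _ := a

def parAdj (G H : LGraph) : G.V ⊕ H.V → G.V ⊕ H.V → Prop
  | .inl a, .inl b => G.adj a b
  | .inr a, .inr b => H.adj a b
  | _, _ => False

/-- The par `G ⅋ H` : disjoint union of `G` and `H`. -/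
def par (G H : LGraph) : LGraph where
  V := G.V ⊕ H.V
  adj := parAdj G H
  symm := by
    rintro (a | a) (b | b) h
    · exact G.symm h
    · exact h.elim
    · exact h.elim
    · exact H.symm h
  irrefl := by
    rintro (a | a) h
    · exact G.irrefl a h
    · exact H.irrefl a h
  label := Sum.elim G.label H.label

def tensorAdj (G H : LGraph) : G.V ⊕ H.V → G.V ⊕ H.V → Prop
  | .inl a, .inl b => G.adj a b
  | .inr a, .inr b => H.adj a b
  | .inl _, .inr _ => True
  | .inr _, .inl _ => True

/-- The tensor `G ⊗ H` : join of `G` and `H` (disjoint union plus all edges in between). -/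
def tensor (G H : LGraph) : LGraph where
  V := G.V ⊕ H.V
  adj := tensorAdj G H
  symm := by
    rintro (a | a) (b | b) h
    · exact G.symm h
    · exact trivial
    · exact trivial
    · exact H.symm h
  irrefl := by
    rintro (a | a) h
    · exact G.irrefl a h
    · exact H.irrefl a h
  label := Sum.elim G.label H.label

/-- The dual graph `Ḡ` : same vertices, complemented edges, dualized labels. -/
def dual (G : LGraph) : LGraph where
  V := G.V
  adj v w := v ≠ w ∧ ¬ G.adj v w
  symm h := ⟨fun e => h.1 e.symm, fun h' => h.2 (G.symm h')⟩
  irrefl _ h := h.1 rfl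
  label v := dualAtom (G.label v)

def plugAdj (C : LGraph) (R : Set C.V) (X : LGraph) : C.V ⊕ X.V → C.V ⊕ X.V → Prop
  | .inl a, .inl b => C.adj a b
  | .inr a, .inr b => X.adj a b
  | .inl a, .inr _ => a ∈ R
  | .inr _, .inl b => b ∈ R

/-- `C[X]_R` : the graph obtained from the context `C[·]_R` by inserting the graph `X`
as a module whose vertices are adjacent exactly to the vertices in `R`. -/
def plug (C : LGraph) (R : Set C.V) (X : LGraph) : LGraph where
  V := C.V ⊕ X.V
  adj := plugAdj C R X
  symm := by
    rintro (a | a) (b | b) h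
    · exact C.symm h
    · exact h
    · exact h
    · exact X.symm h
  irrefl := by
    rintro (a | a) h
    · exact C.irrefl a h
    · exact X.irrefl a h
  label := Sum.elim C.label X.label

def compAdj (G : LGraph) (H : G.V → LGraph) :
    (Σ v : G.V, (H v).V) → (Σ v : G.V, (H v).V) → Prop := fun x y =>
  (∃ (v : G.V) (a b : (H v).V), x = ⟨v, a⟩ ∧ y = ⟨v, b⟩ ∧ (H v).adj a b) ∨
    (x.1 ≠ y.1 ∧ G.adj x.1 y.1)

/-- The composition `G⟨H v₁, …, H vₙ⟩` of the family `H` via the graph `G`: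
replace each vertex `v` of `G` by the graph `H v`. -/
def comp (G : LGraph) (H : G.V → LGraph) : LGraph where
  V := Σ v : G.V, (H v).V
  adj := compAdj G H
  symm := by
    rintro x y (⟨v, a, b, hx, hy, hab⟩ | ⟨hne, hadj⟩)
    · exact Or.inl ⟨v, b, a, hy, hx, (H v).symm hab⟩
    · exact Or.inr ⟨hne.symm, G.symm hadj⟩
  irrefl := by
    rintro ⟨v, a⟩ (⟨w, x, y, hx, hy, hxy⟩ | ⟨hne, _⟩)
    · have h := hx.symm.trans hy
      obtain rfl : x = y := by simpa using h
      exact (H w).irrefl x hxy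
    · exact hne rfl
  label x := (H x.1).label x.2

/-- A module of `G` : a set `M` of vertices such that every vertex outside `M`
is adjacent either to all vertices of `M` or to none of them. -/
def IsModule (G : LGraph) (M : Set G.V) : Prop :=
  ∀ v ∉ M, ∀ x ∈ M, ∀ y ∈ M, (G.adj v x ↔ G.adj v y)

/-- A prime graph: at least 2 vertices and only trivial modules. -/
def Prime (G : LGraph) : Prop :=
  2 ≤ Fintype.card G.V ∧
    ∀ M : Set G.V, G.IsModule M → M = ∅ ∨ (∃ v, M = {v}) ∨ M = Set.univ

/-- `G` is `P₄`-free: no four distinct vertices induce a path on 4 vertices. -/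
def P4Free (G : LGraph) : Prop :=
  ¬ ∃ v₁ v₂ v₃ v₄ : G.V,
      v₁ ≠ v₂ ∧ v₁ ≠ v₃ ∧ v₁ ≠ v₄ ∧ v₂ ≠ v₃ ∧ v₂ ≠ v₄ ∧ v₃ ≠ v₄ ∧
      G.adj v₁ v₂ ∧ G.adj v₂ v₃ ∧ G.adj v₃ v₄ ∧
      ¬ G.adj v₁ v₃ ∧ ¬ G.adj v₁ v₄ ∧ ¬ G.adj v₂ v₄

end LGraph

open LGraph

/-- The `n`-fold tensor `X₁ ⊗ ⋯ ⊗ Xₙ`. -/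
def bigTensor : (n : ℕ) → (Fin n → LGraph) → LGraph
  | 0, _ => LGraph.empty
  | n + 1, F => (F 0).tensor (bigTensor n fun i => F i.succ)

/-- The `n`-fold par `X₁ ⅋ ⋯ ⅋ Xₙ`. -/
def bigPar : (n : ℕ) → (Fin n → LGraph) → LGraph
  | 0, _ => LGraph.empty
  | n + 1, F => (F 0).par (bigPar n fun i => F i.succ)

/-- The inference rules of system GS (premise, conclusion). -/
inductive GSRule : LGraph → LGraph → Prop
  /-- ai↓ : premise `∅`, conclusion `ā ⅋ a`. -/
  | ai (a : Atom) : GSRule LGraph.empty ((single (dualAtom a)).par (single a))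
  /-- ss↓ : premise `B[A]_S`, conclusion `B ⅋ A`, for `A ≠ ∅` and `S ≠ ∅`. -/
  | ss (A B : LGraph) (S : Set B.V) :
      Nonempty A.V → S ≠ ∅ → GSRule (B.plug S A) (B.par A)
  /-- p↓ : premise `(M₁ ⅋ N₁) ⊗ ⋯ ⊗ (Mₙ ⅋ Nₙ)`, conclusion `P̄⟨M₁,…,Mₙ⟩ ⅋ P⟨N₁,…,Nₙ⟩`,
  for `P` prime with `n = |V(P)| ≥ 4` and all `Mᵢ ≠ ∅`. -/
  | p (n : ℕ) (P : LGraph) (e : P.V ≃ Fin n) (M N : Fin n → LGraph) :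
      P.Prime → 4 ≤ n → (∀ i, Nonempty (M i).V) →
      GSRule (bigTensor n fun i => (M i).par (N i))
        ((P.dual.comp fun v => M (e v)).par (P.comp fun v => N (e v)))

/-- The "up" rules ai↑, ss↑, p↑ (premise, conclusion). -/
inductive UpRule : LGraph → LGraph → Prop
  /-- ai↑ : premise `a ⊗ ā`, conclusion `∅`. -/
  | ai (a : Atom) : UpRule ((single a).tensor (single (dualAtom a))) LGraph.empty
  /-- ss↑ : premise `B ⊗ A`, conclusion `B[A]_S`, for `A ≠ ∅` and `S ≠ V(B)`. -/
  | ss (A B : LGraph) (S : Set B.V) :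
      Nonempty A.V → S ≠ Set.univ → UpRule (B.tensor A) (B.plug S A)
  /-- p↑ : premise `P⟨M₁,…,Mₙ⟩ ⊗ P̄⟨N₁,…,Nₙ⟩`, conclusion `(M₁ ⊗ N₁) ⅋ ⋯ ⅋ (Mₙ ⊗ Nₙ)`,
  for `P` prime with `n = |V(P)| ≥ 4` and all `Mᵢ ≠ ∅`. -/
  | p (n : ℕ) (P : LGraph) (e : P.V ≃ Fin n) (M N : Fin n → LGraph) :
      P.Prime → 4 ≤ n → (∀ i, Nonempty (M i).V) →
      UpRule ((P.comp fun v => M (e v)).tensor (P.dual.comp fun v => N (e v)))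
        (bigPar n fun i => (M i).tensor (N i))

/-- The rules of system SGS : the rules of GS together with their duals. -/
def SGSRule (G H : LGraph) : Prop := GSRule G H ∨ UpRule G H

/-- A single inference step in a system: inside some context, replace a module
isomorphic to the premise of a rule by the corresponding conclusion. -/
def Step (Rules : LGraph → LGraph → Prop) (G H : LGraph) : Prop :=
  ∃ (C : LGraph) (R : Set C.V) (p c : LGraph),
    Rules p c ∧ G.iso (C.plug R p) ∧ H.iso (C.plug R c)

/-- A derivation in a system from `G` to `H` : a finite sequence of inference steps
and isomorphisms leading from `G` to `H`. -/
def Deriv (Rules : LGraph → LGraph → Prop) (G H : LGraph) : Prop :=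
  Relation.ReflTransGen (fun X Y => X.iso Y ∨ Step Rules X Y) G H

/-- A graph is provable in a system if there is a derivation from `∅` to it. -/
def Provable (Rules : LGraph → LGraph → Prop) (G : LGraph) : Prop :=
  Deriv Rules LGraph.empty G

/-- Formulas: unit, positive and negative atoms, par and tensor. -/
inductive Formula where
  | unit : Formula
  | pos (a : ℕ) : Formula
  | neg (a : ℕ) : Formula
  | par (φ ψ : Formula) : Formula
  | tens (φ ψ : Formula) : Formula

/-- The graph `[φ]` of a formula `φ`. -/
def Formula.graph : Formula → LGraph
  | .unit => LGraph.empty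
  | .pos a => single (a, true)
  | .neg a => single (a, false)
  | .par φ ψ => φ.graph.par ψ.graph
  | .tens φ ψ => φ.graph.tensor ψ.graph

/-- Structural equivalence of formulas: the smallest congruence making `⅋` and `⊗`
associative and commutative with unit `∘`. -/
inductive Formula.equiv : Formula → Formula → Prop
  | refl (φ) : Formula.equiv φ φ
  | symm {φ ψ} : Formula.equiv φ ψ → Formula.equiv ψ φ
  | trans {φ ψ χ} : Formula.equiv φ ψ → Formula.equiv ψ χ → Formula.equiv φ χ
  | parComm (φ ψ) : Formula.equiv (.par φ ψ) (.par ψ φ)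
  | parAssoc (φ ψ χ) : Formula.equiv (.par φ (.par ψ χ)) (.par (.par φ ψ) χ)
  | parUnit (φ) : Formula.equiv (.par φ .unit) φ
  | tensComm (φ ψ) : Formula.equiv (.tens φ ψ) (.tens ψ φ)
  | tensAssoc (φ ψ χ) : Formula.equiv (.tens φ (.tens ψ χ)) (.tens (.tens φ ψ) χ)
  | tensUnit (φ) : Formula.equiv (.tens φ .unit) φ
  | parCongr {φ φ' ψ ψ'} : Formula.equiv φ φ' → Formula.equiv ψ ψ' →
      Formula.equiv (.par φ ψ) (.par φ' ψ')
  | tensCongr {φ φ' ψ ψ'} : Formula.equiv φ φ' → Formula.equiv ψ ψ' →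
      Formula.equiv (.tens φ ψ) (.tens φ' ψ')

/-- A formula is unit-free if it contains no occurrence of the unit `∘`. -/
def Formula.UnitFree : Formula → Prop
  | .unit => False
  | .pos _ => True
  | .neg _ => True
  | .par φ ψ => φ.UnitFree ∧ ψ.UnitFree
  | .tens φ ψ => φ.UnitFree ∧ ψ.UnitFree

/-- The sequent calculus MLL° (multiplicative linear logic with mix) on multisets
of formulas. -/
inductive MLL : Multiset Formula → Prop
  | ax (a : ℕ) : MLL {Formula.pos a, Formula.neg a}
  | tens {Γ Δ : Multiset Formula} (φ ψ : Formula) :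
      MLL (φ ::ₘ Γ) → MLL (ψ ::ₘ Δ) → MLL (Formula.tens φ ψ ::ₘ (Γ + Δ))
  | par {Γ : Multiset Formula} (φ ψ : Formula) :
      MLL (φ ::ₘ ψ ::ₘ Γ) → MLL (Formula.par φ ψ ::ₘ Γ)
  | mix {Γ Δ : Multiset Formula} : MLL Γ → MLL Δ → MLL (Γ + Δ)

/-- Case (i): `G` is a single-vertex graph. -/
def CaseSingleton (G : LGraph) : Prop := ∃ a : Atom, G.iso (single a)

/-- Case (ii): `G = A ⅋ B` with `A`, `B` non-empty (up to isomorphism). -/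
def CasePar (G : LGraph) : Prop :=
  ∃ A B : LGraph, Nonempty A.V ∧ Nonempty B.V ∧ G.iso (A.par B)

/-- Case (iii): `G = A ⊗ B` with `A`, `B` non-empty (up to isomorphism). -/
def CaseTensor (G : LGraph) : Prop :=
  ∃ A B : LGraph, Nonempty A.V ∧ Nonempty B.V ∧ G.iso (A.tensor B)

/-- Case (iv): `G = P⟨A₁, …, Aₙ⟩` for a prime graph `P` with `n = |V(P)| ≥ 4`
and non-empty graphs `A₁, …, Aₙ` (up to isomorphism). -/
def CasePrime (G : LGraph) : Prop :=
  ∃ (n : ℕ) (P : LGraph) (e : P.V ≃ Fin n) (A : Fin n → LGraph),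
    P.Prime ∧ 4 ≤ n ∧ (∀ i, Nonempty (A i).V) ∧ G.iso (P.comp fun v => A (e v))

/-!
A non-empty graph `G` with at least two vertices is either disconnected (case (ii)), or has a
disconnected complement (case (iii)), or neither; both at once is impossible. In the last case two
overlapping proper modules have a proper union, since a module cover `M ∪ N = V` with `M, N ≠ V`
makes all adjacencies between `V \ N` and `N` equal and so disconnects `G` or its complement.
Hence "lying in a common proper module" is an equivalence relation whose classes are the maximal
proper modules, and `G` is the composition of its quotient `P` with the classes. The quotient is
prime, and has at least four vertices: two-vertex graphs are disconnected or co-disconnected, and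
three-vertex graphs are never prime. Conversely a composition over a connected and co-connected
prime graph is connected and co-connected, which separates case (iv) from (ii) and (iii).
-/

open Function

section Separation

variable {α β : Type*}

def IsSeparation (r : α → α → Prop) (S : Set α) : Prop :=
  S.Nonempty ∧ Sᶜ.Nonempty ∧ ∀ v ∈ S, ∀ w ∉ S, ¬ r v w

lemma IsSeparation.nontrivial {r : α → α → Prop} {S : Set α} (hS : IsSeparation r S) :
    Nontrivial α :=
  let ⟨⟨v, hv⟩, ⟨w, hw⟩, _⟩ := hS
  ⟨v, w, ne_of_mem_of_not_mem hv hw⟩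

lemma IsSeparation.compl {r : α → α → Prop} (hr : ∀ v w, r v w → r w v) {S : Set α}
    (hS : IsSeparation r S) : IsSeparation r Sᶜ :=
  ⟨hS.2.1, by simpa using hS.1, fun v hv w hw hvw => hS.2.2 w (not_not.mp hw) v hv (hr v w hvw)⟩

lemma IsSeparation.preimage {r : α → α → Prop} {s : β → β → Prop} {π : α → β}
    (hπ : Surjective π) (hrs : ∀ v w, π v ≠ π w → r v w → s (π v) (π w)) {S : Set β}
    (hS : IsSeparation s S) : IsSeparation r (π ⁻¹' S) := by
  obtain ⟨⟨q, hq⟩, ⟨q', hq'⟩, hS⟩ := hS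
  obtain ⟨v, rfl⟩ := hπ q
  obtain ⟨v', rfl⟩ := hπ q'
  exact ⟨⟨v, hq⟩, ⟨v', hq'⟩, fun v hv w hw hvw =>
    hS _ hv _ hw (hrs v w (ne_of_mem_of_not_mem (s := S) hv hw) hvw)⟩

lemma not_isSeparation_sigma {ι : Type*} [Nontrivial ι] {F : ι → Type*}
    (hF : ∀ i, Nonempty (F i)) {R : ι → ι → Prop} {Q : (Σ i, F i) → (Σ i, F i) → Prop}
    (hR : ∀ v w, R v w → R w v) (hRQ : ∀ v w a b, R v w → Q ⟨v, a⟩ ⟨w, b⟩)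
    (hconn : ∀ T, ¬ IsSeparation R T) (S : Set (Σ i, F i)) : ¬ IsSeparation Q S := by
  rintro ⟨⟨⟨v, a⟩, hva⟩, ⟨⟨w, b⟩, hwb⟩, hS⟩
  have closed : ∀ x y, x ∈ S → Q x y → y ∈ S := fun x y hx hxy =>
    by_contra fun hy => hS x hx y hy hxy
  have neighbour : ∀ v, ∃ u, R v u := by
    intro v
    by_contra! h
    obtain ⟨u, hu⟩ := exists_ne v
    exact hconn {v} ⟨⟨v, rfl⟩, ⟨u, hu⟩, fun x hx y _ => hx ▸ h y⟩
  have fibre : ∀ v a b, ⟨v, a⟩ ∈ S → (⟨v, b⟩ : Σ i, F i) ∈ S := by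
    intro v a b h
    obtain ⟨u, hu⟩ := neighbour v
    obtain ⟨c⟩ := hF u
    exact closed _ _ (closed _ _ h (hRQ _ _ a c hu)) (hRQ _ _ c b (hR _ _ hu))
  refine hconn {i | ∃ a, ⟨i, a⟩ ∈ S} ⟨⟨v, a, hva⟩, ⟨w, fun ⟨_, h⟩ => hwb (fibre _ _ _ h)⟩, ?_⟩
  rintro x ⟨a, ha⟩ y hy hxy
  obtain ⟨c⟩ := hF y
  exact hy ⟨c, closed _ _ ha (hRQ _ _ _ _ hxy)⟩

end Separation

namespace LGraph

variable {G H : LGraph}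

def Iso.symm (f : Iso G H) : Iso H G where
  toEquiv := f.toEquiv.symm
  adj_iff v w := by simpa using (f.adj_iff (f.toEquiv.symm v) (f.toEquiv.symm w)).symm
  label_eq v := by simpa using (f.label_eq (f.toEquiv.symm v)).symm

def Iso.dual (f : Iso G H) : Iso G.dual H.dual where
  toEquiv := f.toEquiv
  adj_iff v w := and_congr f.toEquiv.injective.ne_iff.symm (not_congr (f.adj_iff v w))
  label_eq v := congrArg dualAtom (f.label_eq v)

noncomputable def induce (G : LGraph) (S : Set G.V) : LGraph where
  V := S
  fintype := Fintype.ofFinite _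
  adj a b := G.adj a b
  symm h := G.symm h
  irrefl a := G.irrefl a
  label a := G.label a

/-- The labels are never used: a composition takes its labels from the fibres. -/
noncomputable def quotient (G : LGraph) (s : Setoid G.V) : LGraph where
  V := Quotient s
  fintype := Fintype.ofFinite _
  adj q r := q ≠ r ∧ G.adj q.out r.out
  symm h := ⟨h.1.symm, G.symm h.2⟩
  irrefl _ h := h.1 rfl
  label q := G.label q.out

def Disconnected (G : LGraph) : Prop := ∃ S, IsSeparation G.adj S

lemma Disconnected.nontrivial (hG : G.Disconnected) : Nontrivial G.V :=
  let ⟨_, hS⟩ := hG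
  hS.nontrivial

section Modules

variable {M N : Set G.V}

lemma isModule_singleton (v : G.V) : G.IsModule {v} := by
  rintro u - a rfl b rfl
  rfl

lemma isModule_dual_iff : G.dual.IsModule M ↔ G.IsModule M := by
  refine forall₂_congr fun v hv => forall₂_congr fun x hx => forall₂_congr fun y hy => ?_
  have hvx : v ≠ x := ne_of_mem_of_not_mem hx hv |>.symm
  have hvy : v ≠ y := ne_of_mem_of_not_mem hy hv |>.symm
  rw [show G.dual.adj v x ↔ ¬ G.adj v x from and_iff_right hvx,
    show G.dual.adj v y ↔ ¬ G.adj v y from and_iff_right hvy]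
  exact not_iff_not

lemma Prime.dual {P : LGraph} (hP : P.Prime) : P.dual.Prime :=
  ⟨hP.1, fun M hM => hP.2 M (isModule_dual_iff.mp hM)⟩

lemma IsModule.union (hM : G.IsModule M) (hN : G.IsModule N) (hMN : (M ∩ N).Nonempty) :
    G.IsModule (M ∪ N) := by
  obtain ⟨v, hvM, hvN⟩ := hMN
  have key : ∀ u ∉ M ∪ N, ∀ c ∈ M ∪ N, G.adj u c ↔ G.adj u v := by
    rintro u hu c (hc | hc)
    · exact hM u (fun h => hu (.inl h)) c hc v hvM
    · exact hN u (fun h => hu (.inr h)) c hc v hvN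
  exact fun u hu a ha b hb => (key u hu a ha).trans (key u hu b hb).symm

lemma IsModule.adj_iff_of_disjoint (hM : G.IsModule M) (hN : G.IsModule N) (hMN : Disjoint M N)
    {v v' w w' : G.V} (hv : v ∈ M) (hv' : v' ∈ M) (hw : w ∈ N) (hw' : w' ∈ N) :
    G.adj v w ↔ G.adj v' w' :=
  calc G.adj v w ↔ G.adj v w' := hN v (hMN.notMem_of_mem_left hv) w hw w' hw'
    _ ↔ G.adj w' v := ⟨G.symm, G.symm⟩
    _ ↔ G.adj w' v' := hM w' (hMN.notMem_of_mem_right hw') v hv v' hv'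
    _ ↔ G.adj v' w' := ⟨G.symm, G.symm⟩

lemma isModule_of_isSeparation {S : Set G.V} (hS : IsSeparation G.adj S) : G.IsModule S :=
  fun u hu a ha b hb => iff_of_false (fun h => hS.2.2 a ha u hu (G.symm h))
    (fun h => hS.2.2 b hb u hu (G.symm h))

lemma disconnected_or_dual_of_adj_iff {S : Set G.V} (hS : S.Nonempty) (hS' : Sᶜ.Nonempty)
    {c : Prop} (hc : ∀ a ∈ S, ∀ b ∉ S, G.adj a b ↔ c) :
    G.Disconnected ∨ G.dual.Disconnected := by
  by_cases h : c
  · exact .inr ⟨S, hS, hS', fun a ha b hb hab => hab.2 ((hc a ha b hb).mpr h)⟩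
  · exact .inl ⟨S, hS, hS', fun a ha b hb hab => h ((hc a ha b hb).mp hab)⟩

/-- For `x ∉ N` and `y ∉ M`, every adjacency between `Nᶜ ⊆ M` and `N ⊇ Mᶜ` equals `G.adj x y`. -/
lemma disconnected_or_dual_of_union_eq_univ (hM : G.IsModule M) (hN : G.IsModule N)
    (hMN : M ∪ N = Set.univ) (hMu : M ≠ Set.univ) (hNu : N ≠ Set.univ) :
    G.Disconnected ∨ G.dual.Disconnected := by
  obtain ⟨x, hxN⟩ := (Set.ne_univ_iff_exists_notMem N).mp hNu
  obtain ⟨y, hyM⟩ := (Set.ne_univ_iff_exists_notMem M).mp hMu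
  have mem_M : ∀ a ∉ N, a ∈ M := fun a ha =>
    ((Set.eq_univ_iff_forall.mp hMN) a).resolve_right ha
  have hyN : y ∈ N := ((Set.eq_univ_iff_forall.mp hMN) y).resolve_left hyM
  refine disconnected_or_dual_of_adj_iff (S := Nᶜ) ⟨x, hxN⟩ ⟨y, not_not.mpr hyN⟩
    (c := G.adj x y) fun a ha b hb => ?_
  calc G.adj a b ↔ G.adj a y := hN a ha b (not_not.mp hb) y hyN
    _ ↔ G.adj y a := ⟨G.symm, G.symm⟩
    _ ↔ G.adj y x := hM y hyM a (mem_M a ha) x (mem_M x hxN)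
    _ ↔ G.adj x y := ⟨G.symm, G.symm⟩

end Modules

lemma not_disconnected_and_dual (G : LGraph) : ¬ (G.Disconnected ∧ G.dual.Disconnected) := by
  rintro ⟨⟨S, ⟨s, hs⟩, ⟨s', hs'⟩, hS⟩, ⟨T, ⟨t, ht⟩, ⟨t', ht'⟩, hT⟩⟩
  have same_side : ∀ x ∈ S, ∀ y ∉ S, (x ∈ T ↔ y ∈ T) := by
    intro x hx y hy
    have hxy := ne_of_mem_of_not_mem hx hy
    constructor
    · exact fun hxT => by_contra fun hyT => hT x hxT y hyT ⟨hxy, hS x hx y hy⟩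
    · exact fun hyT => by_contra fun hxT =>
        hT y hyT x hxT ⟨hxy.symm, fun h => hS x hx y hy (G.symm h)⟩
  obtain ⟨u, hu⟩ : ∃ u, ¬ (u ∈ T ↔ s ∈ T) := by
    by_cases h : s ∈ T
    · exact ⟨t', by tauto⟩
    · exact ⟨t, by tauto⟩
  by_cases huS : u ∈ S
  · exact hu ((same_side u huS s' hs').trans (same_side s hs s' hs').symm)
  · exact hu (same_side s hs u huS).symm

lemma Prime.not_disconnected {P : LGraph} (hP : P.Prime) (h3 : 2 < Fintype.card P.V) :
    ¬ P.Disconnected := by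
  classical
  rintro ⟨S, hS⟩
  have singleton : ∀ T, IsSeparation P.adj T → ∃ v, T = {v} := by
    intro T hT
    rcases hP.2 T (isModule_of_isSeparation hT) with h | h | h
    · exact absurd h hT.1.ne_empty
    · exact h
    · exact absurd h (Set.nonempty_compl.mp hT.2.1)
  obtain ⟨x, hx⟩ := singleton S hS
  obtain ⟨y, hy⟩ := singleton Sᶜ (hS.compl fun _ _ => P.symm)
  have hcover : ∀ z, z = x ∨ z = y := fun z => (em (z ∈ S)).imp
    (fun hz => show z ∈ ({x} : Set P.V) from hx ▸ hz)
    (fun hz => show z ∈ ({y} : Set P.V) from hy ▸ hz)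
  have hsub : (Finset.univ : Finset P.V) ⊆ {x, y} := fun z _ => by simpa using hcover z
  have := (Finset.card_le_card hsub).trans Finset.card_le_two
  rw [Finset.card_univ] at this
  omega

/-- Otherwise `{b, c}` would be a non-trivial module. -/
lemma Prime.not_adj_iff_adj_of_cover {P : LGraph} (hP : P.Prime) {a b c : P.V} (hab : a ≠ b)
    (hac : a ≠ c) (hbc : b ≠ c) (hcover : ∀ u, u = a ∨ u = b ∨ u = c) :
    ¬ (P.adj a b ↔ P.adj a c) := by
  intro habc
  have hmod : P.IsModule {b, c} := by
    intro u hu d hd d' hd'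
    obtain rfl : u = a := by
      rcases hcover u with h | h | h
      · exact h
      · exact absurd (.inl h) hu
      · exact absurd (.inr h) hu
    rcases hd with rfl | rfl <;> rcases hd' with rfl | rfl <;> tauto
  rcases hP.2 _ hmod with h | ⟨v, h⟩ | h
  · exact (Set.insert_nonempty b {c}).ne_empty h
  · have hb : b ∈ ({v} : Set P.V) := h ▸ Set.mem_insert b {c}
    have hc : c ∈ ({v} : Set P.V) := h ▸ Set.mem_insert_of_mem b rfl
    exact hbc (hb.trans hc.symm)
  · rcases (h ▸ Set.mem_univ a : a ∈ ({b, c} : Set P.V)) with h' | h'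
    · exact hab h'
    · exact hac h'

lemma Prime.card_ne_three {P : LGraph} (hP : P.Prime) : Fintype.card P.V ≠ 3 := by
  classical
  intro h3
  obtain ⟨x, y, z, hxy, hxz, hyz, huniv⟩ := Finset.card_eq_three.mp h3
  have hcover : ∀ u, u = x ∨ u = y ∨ u = z := fun u => by
    simpa [huniv] using Finset.mem_univ u
  have hx := hP.not_adj_iff_adj_of_cover hxy hxz hyz hcover
  have hy := hP.not_adj_iff_adj_of_cover hxy.symm hyz hxz fun u => by have := hcover u; tauto
  have hz := hP.not_adj_iff_adj_of_cover hxz.symm hyz.symm hxy fun u => by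
    have := hcover u; tauto
  rw [show P.adj y x ↔ P.adj x y from ⟨P.symm, P.symm⟩] at hy
  rw [show P.adj z x ↔ P.adj x z from ⟨P.symm, P.symm⟩,
    show P.adj z y ↔ P.adj y z from ⟨P.symm, P.symm⟩] at hz
  tauto

lemma disconnected_or_dual_of_card_eq_two (h2 : Fintype.card G.V = 2) :
    G.Disconnected ∨ G.dual.Disconnected := by
  classical
  obtain ⟨x, y, hxy, huniv⟩ := Finset.card_eq_two.mp h2
  refine disconnected_or_dual_of_adj_iff (S := {x}) (Set.singleton_nonempty x)
    ⟨y, Ne.symm hxy⟩ (c := G.adj x y) ?_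
  rintro a rfl b hb
  obtain rfl : b = y := (by simpa [huniv] using Finset.mem_univ b : b = a ∨ b = y).resolve_left hb
  rfl

section ModuleQuotient

variable (G H) in
/-- The fibres of such a map are modules of `G`. -/
def IsModuleQuotient (π : G.V → H.V) : Prop :=
  ∀ v w, π v ≠ π w → (G.adj v w ↔ H.adj (π v) (π w))

variable {π : G.V → H.V}

lemma Iso.isModuleQuotient (f : Iso G H) : G.IsModuleQuotient H f.toEquiv :=
  fun v w _ => f.adj_iff v w

lemma IsModuleQuotient.dual (hπ : G.IsModuleQuotient H π) :
    G.dual.IsModuleQuotient H.dual π :=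
  fun v w h => and_congr (iff_of_true (fun e => h (congrArg π e)) h) (not_congr (hπ v w h))

lemma IsModuleQuotient.disconnected (hπ : G.IsModuleQuotient H π) (hsurj : Surjective π)
    (hH : H.Disconnected) : G.Disconnected :=
  let ⟨S, hS⟩ := hH
  ⟨π ⁻¹' S, hS.preimage hsurj fun v w hne h => (hπ v w hne).mp h⟩

lemma IsModuleQuotient.isModule_preimage (hπ : G.IsModuleQuotient H π) {S : Set H.V}
    (hS : H.IsModule S) : G.IsModule (π ⁻¹' S) := by
  intro u hu a ha b hb
  rw [hπ u a (ne_of_mem_of_not_mem (s := S) ha hu).symm,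
    hπ u b (ne_of_mem_of_not_mem (s := S) hb hu).symm]
  exact hS _ hu _ ha _ hb

/-- The fibre over `q` is written `{v | e (π v) = e q}` so that it is literally `A (e q)` for
`A i := G.induce {v | e (π v) = i}`, the shape `CasePrime` asks for. -/
lemma IsModuleQuotient.iso_comp (hπ : G.IsModuleQuotient H π) {ι : Type*} {e : H.V → ι}
    (he : Injective e) : G.iso (H.comp fun q => G.induce {v | e (π v) = e q}) := by
  refine ⟨⟨⟨fun v => ⟨π v, v, rfl⟩, fun x => x.2.1, fun v => rfl, ?_⟩, fun v w => ?_,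
    fun v => rfl⟩⟩
  · rintro ⟨q, v, hv⟩
    obtain rfl : π v = q := he hv
    rfl
  by_cases h : π v = π w
  · refine ⟨fun hvw => .inl ⟨π v, ⟨v, rfl⟩, ⟨w, congrArg e h.symm⟩, rfl,
      Sigma.subtype_ext h.symm rfl, hvw⟩, ?_⟩
    rintro (⟨u, a, b, hva, hwb, hab⟩ | ⟨hne, -⟩)
    · have hv : v = a.1 := congrArg (fun x => x.2.1) hva
      have hw : w = b.1 := congrArg (fun x => x.2.1) hwb
      rwa [hv, hw]
    · exact absurd h hne
  · rw [hπ v w h]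
    refine ⟨fun hvw => .inr ⟨h, hvw⟩, ?_⟩
    rintro (⟨u, a, b, hva, hwb, -⟩ | ⟨-, hvw⟩)
    · exact absurd ((congrArg Sigma.fst hva).trans (congrArg Sigma.fst hwb).symm) h
    · exact hvw

lemma isModuleQuotient_quotient {s : Setoid G.V} (hs : ∀ v, G.IsModule {w | s v w}) :
    G.IsModuleQuotient (G.quotient s) (Quotient.mk s) := by
  intro v w h
  have hvw : Disjoint {x | s v x} {x | s w x} := Set.disjoint_left.mpr fun x hvx hwx =>
    h (Quotient.sound ((s.trans hvx (s.symm hwx))))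
  exact ((hs v).adj_iff_of_disjoint (hs w) hvw (s.refl v) (s.symm (Quotient.mk_out v))
    (s.refl w) (s.symm (Quotient.mk_out w))).trans (and_iff_right h).symm

end ModuleQuotient

section MaximalModules

def IsProperModule (G : LGraph) (M : Set G.V) : Prop := G.IsModule M ∧ M ≠ Set.univ

variable (hd : ¬ G.Disconnected) (hdd : ¬ G.dual.Disconnected)
include hd hdd

lemma IsProperModule.union {M N : Set G.V} (hM : G.IsProperModule M) (hN : G.IsProperModule N)
    (hMN : (M ∩ N).Nonempty) : G.IsProperModule (M ∪ N) :=
  ⟨hM.1.union hN.1 hMN, fun h => (disconnected_or_dual_of_union_eq_univ hM.1 hN.1 h hM.2 hN.2).elim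
    hd hdd⟩

def moduleSetoid [Nontrivial G.V] : Setoid G.V where
  r v w := ∃ M, G.IsProperModule M ∧ v ∈ M ∧ w ∈ M
  iseqv :=
    { refl v := ⟨{v}, ⟨isModule_singleton v, Set.singleton_ne_univ v⟩, rfl, rfl⟩
      symm := fun ⟨M, hM, hv, hw⟩ => ⟨M, hM, hw, hv⟩
      trans := fun ⟨M, hM, hv, hw⟩ ⟨N, hN, hw', hu⟩ =>
        ⟨M ∪ N, hM.union hd hdd hN ⟨_, hw, hw'⟩, .inl hv, .inr hu⟩ }

lemma isProperModule_moduleSetoid_class [Nontrivial G.V] (v : G.V) :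
    G.IsProperModule {w | moduleSetoid hd hdd v w} := by
  obtain ⟨M, ⟨hM, hvM⟩, hmax⟩ := Set.Finite.exists_maximal (s := {M | G.IsProperModule M ∧ v ∈ M})
    (Set.toFinite _) ⟨{v}, ⟨isModule_singleton v, Set.singleton_ne_univ v⟩, rfl⟩
  convert hM
  ext w
  refine ⟨fun ⟨N, hN, hvN, hwN⟩ => ?_, fun hw => ⟨M, hM, hvM, hw⟩⟩
  exact hmax ⟨hM.union hd hdd hN ⟨v, hvM, hvN⟩, .inl hvM⟩ Set.subset_union_left (.inr hwN)

lemma prime_quotient_moduleSetoid [Nontrivial G.V] :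
    (G.quotient (moduleSetoid hd hdd)).Prime := by
  set s := moduleSetoid hd hdd
  have hπ := isModuleQuotient_quotient fun v => (isProperModule_moduleSetoid_class hd hdd v).1
  refine ⟨?_, fun S hS => ?_⟩
  · obtain ⟨v⟩ := ‹Nontrivial G.V›.to_nonempty
    obtain ⟨w, hw⟩ := (Set.ne_univ_iff_exists_notMem _).mp
      (isProperModule_moduleSetoid_class hd hdd v).2
    exact Fintype.one_lt_card_iff.mpr ⟨⟦v⟧, ⟦w⟧, fun h => hw (Quotient.exact h)⟩
  by_cases hsub : S.Subsingleton
  · rcases hsub.eq_empty_or_singleton with h | h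
    · exact .inl h
    · exact .inr (.inl h)
  obtain ⟨q, hq, r, hr, hqr⟩ := Set.not_subsingleton_iff.mp hsub
  have out_mem : ∀ q, q.out ∈ Quotient.mk s ⁻¹' S ↔ q ∈ S := fun q =>
    Iff.of_eq (congrArg (· ∈ S) (Quotient.out_eq q))
  have hT : Quotient.mk s ⁻¹' S = Set.univ := by_contra fun hT =>
    hqr (Quotient.out_equiv_out.mp
      ⟨_, ⟨hπ.isModule_preimage hS, hT⟩, (out_mem q).mpr hq, (out_mem r).mpr hr⟩)
  exact .inr (.inr (Set.eq_univ_of_forall fun q => (out_mem q).mp (hT ▸ Set.mem_univ _)))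

end MaximalModules

lemma not_disconnected_comp {P : LGraph} [Nontrivial P.V] {A : P.V → LGraph}
    (hA : ∀ v, Nonempty (A v).V) (hP : ¬ P.Disconnected) : ¬ (P.comp A).Disconnected :=
  fun ⟨S, hS⟩ => not_isSeparation_sigma (R := P.adj) (Q := (P.comp A).adj) hA (fun _ _ => P.symm)
    (fun v w _ _ h => .inr ⟨fun e => P.irrefl w ((show v = w from e) ▸ h), h⟩)
    (fun T hT => hP ⟨T, hT⟩) S hS

lemma not_disconnected_dual_comp {P : LGraph} [Nontrivial P.V] {A : P.V → LGraph}
    (hA : ∀ v, Nonempty (A v).V) (hP : ¬ P.dual.Disconnected) :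
    ¬ (P.comp A).dual.Disconnected := by
  refine fun ⟨S, hS⟩ => not_isSeparation_sigma (R := P.dual.adj) (Q := (P.comp A).dual.adj) hA
    (fun _ _ => P.dual.symm) (fun v w a b h => ⟨fun e => h.1 (congrArg Sigma.fst e), ?_⟩)
    (fun T hT => hP ⟨T, hT⟩) S hS
  rintro (⟨u, x, y, hx, hy, -⟩ | ⟨-, hvw⟩)
  · exact h.1 ((congrArg Sigma.fst hx).trans (congrArg Sigma.fst hy).symm)
  · exact h.2 hvw

lemma Iso.disconnected_iff (f : Iso G H) : G.Disconnected ↔ H.Disconnected :=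
  ⟨f.symm.isModuleQuotient.disconnected f.toEquiv.symm.surjective,
    f.isModuleQuotient.disconnected f.toEquiv.surjective⟩

end LGraph

open LGraph

lemma caseSingleton_iff {G : LGraph} (hG : Nonempty G.V) :
    CaseSingleton G ↔ Subsingleton G.V := by
  refine ⟨fun ⟨_, ⟨f⟩⟩ => ⟨fun v w => f.toEquiv.injective rfl⟩, fun _ => ?_⟩
  obtain ⟨x⟩ := hG
  exact ⟨G.label x, ⟨⟨fun _ => (), fun _ => x, fun v => Subsingleton.elim _ _, fun _ => rfl⟩,
    fun v w => iff_of_false (Subsingleton.elim v w ▸ G.irrefl v) id,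
    fun v => congrArg G.label (Subsingleton.elim x v)⟩⟩

lemma casePar_iff {G : LGraph} : CasePar G ↔ G.Disconnected := by
  classical
  constructor
  · rintro ⟨A, B, ⟨a⟩, ⟨b⟩, ⟨f⟩⟩
    refine f.disconnected_iff.mpr
      ⟨Set.range Sum.inl, ⟨.inl a, a, rfl⟩, ⟨.inr b, by rintro ⟨_, ⟨⟩⟩⟩, ?_⟩
    rintro _ ⟨v, rfl⟩ (w | w) hw h
    · exact hw ⟨w, rfl⟩
    · exact h
  · rintro ⟨S, ⟨s, hs⟩, ⟨s', hs'⟩, hS⟩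
    refine ⟨G.induce S, G.induce Sᶜ, ⟨⟨s, hs⟩⟩, ⟨⟨s', hs'⟩⟩, ⟨Iso.symm ⟨Equiv.sumCompl (· ∈ S),
      ?_, by rintro (_ | _) <;> rfl⟩⟩⟩
    rintro (⟨v, hv⟩ | ⟨v, hv⟩) (⟨w, hw⟩ | ⟨w, hw⟩)
    · exact Iff.rfl
    · exact iff_of_false id (hS v hv w hw)
    · exact iff_of_false id fun h => hS w hw v hv (G.symm h)
    · exact Iff.rfl

lemma caseTensor_iff {G : LGraph} : CaseTensor G ↔ G.dual.Disconnected := by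
  classical
  constructor
  · rintro ⟨A, B, ⟨a⟩, ⟨b⟩, ⟨f⟩⟩
    refine f.dual.disconnected_iff.mpr
      ⟨Set.range Sum.inl, ⟨.inl a, a, rfl⟩, ⟨.inr b, by rintro ⟨_, ⟨⟩⟩⟩, ?_⟩
    rintro _ ⟨v, rfl⟩ (w | w) hw h
    · exact hw ⟨w, rfl⟩
    · exact h.2 trivial
  · rintro ⟨S, ⟨s, hs⟩, ⟨s', hs'⟩, hS⟩
    have hadj : ∀ v ∈ S, ∀ w ∉ S, G.adj v w := fun v hv w hw =>
      not_not.mp fun h => hS v hv w hw ⟨ne_of_mem_of_not_mem hv hw, h⟩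
    refine ⟨G.induce S, G.induce Sᶜ, ⟨⟨s, hs⟩⟩, ⟨⟨s', hs'⟩⟩, ⟨Iso.symm ⟨Equiv.sumCompl (· ∈ S),
      ?_, by rintro (_ | _) <;> rfl⟩⟩⟩
    rintro (⟨v, hv⟩ | ⟨v, hv⟩) (⟨w, hw⟩ | ⟨w, hw⟩)
    · exact Iff.rfl
    · exact iff_of_true trivial (hadj v hv w hw)
    · exact iff_of_true trivial (G.symm (hadj w hw v hv))
    · exact Iff.rfl

lemma casePrime_of_not_disconnected {G : LGraph} [Nontrivial G.V] (hd : ¬ G.Disconnected)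
    (hdd : ¬ G.dual.Disconnected) : CasePrime G := by
  set P := G.quotient (moduleSetoid hd hdd)
  have hπ := isModuleQuotient_quotient fun v => (isProperModule_moduleSetoid_class hd hdd v).1
  have hP : P.Prime := prime_quotient_moduleSetoid hd hdd
  have h2 : Fintype.card P.V ≠ 2 := fun h =>
    (disconnected_or_dual_of_card_eq_two h).elim (hd ∘ hπ.disconnected Quotient.mk_surjective)
      (hdd ∘ hπ.dual.disconnected Quotient.mk_surjective)
  let e := Fintype.equivFin P.V
  have h4 : 4 ≤ Fintype.card P.V := by
    have := hP.1
    have := hP.card_ne_three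
    omega
  have hA : ∀ i, Nonempty (G.induce {v | e ⟦v⟧ = i}).V := fun i =>
    ⟨⟨(e.symm i).out, (congrArg e (Quotient.out_eq _)).trans (e.apply_symm_apply i)⟩⟩
  exact ⟨_, P, e, _, hP, h4, hA, hπ.iso_comp e.injective⟩

lemma casePrime_iff {G : LGraph} :
    CasePrime G ↔ Nontrivial G.V ∧ ¬ G.Disconnected ∧ ¬ G.dual.Disconnected := by
  refine ⟨fun ⟨n, P, e, A, hP, h4, hA, ⟨f⟩⟩ => ?_, fun ⟨_, hd, hdd⟩ =>
    casePrime_of_not_disconnected hd hdd⟩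
  have h3 : 2 < Fintype.card P.V := by rw [Fintype.card_congr e, Fintype.card_fin]; omega
  have : Nontrivial P.V := Fintype.one_lt_card_iff_nontrivial.mp (by omega)
  have hA' : ∀ v, Nonempty (A (e v)).V := fun v => hA (e v)
  obtain ⟨v, w, hvw⟩ := exists_pair_ne P.V
  obtain ⟨⟨a⟩, ⟨b⟩⟩ := And.intro (hA' v) (hA' w)
  have : Nontrivial (P.comp fun v => A (e v)).V :=
    ⟨⟨v, a⟩, ⟨w, b⟩, fun h => hvw (congrArg Sigma.fst h)⟩
  refine ⟨f.toEquiv.nontrivial,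
    fun h => not_disconnected_comp hA' (hP.not_disconnected h3) (f.disconnected_iff.mp h),
    fun h => not_disconnected_dual_comp hA' (hP.dual.not_disconnected h3)
      (f.dual.disconnected_iff.mp h)⟩

/-- For every non-empty graph `G`, exactly one of the four cases
(i)–(iv) holds. -/
theorem modular_decomposition (G : LGraph) (hG : Nonempty G.V) :
    (CaseSingleton G ∧ ¬ CasePar G ∧ ¬ CaseTensor G ∧ ¬ CasePrime G) ∨
    (¬ CaseSingleton G ∧ CasePar G ∧ ¬ CaseTensor G ∧ ¬ CasePrime G) ∨
    (¬ CaseSingleton G ∧ ¬ CasePar G ∧ CaseTensor G ∧ ¬ CasePrime G) ∨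
    (¬ CaseSingleton G ∧ ¬ CasePar G ∧ ¬ CaseTensor G ∧ CasePrime G) := by
  rw [caseSingleton_iff hG, casePar_iff, caseTensor_iff, casePrime_iff,
    ← not_nontrivial_iff_subsingleton]
  have hpar : G.Disconnected → Nontrivial G.V := Disconnected.nontrivial
  have htens : G.dual.Disconnected → Nontrivial G.V := Disconnected.nontrivial
  have := G.not_disconnected_and_dual
  tauto
end GSP
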